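/- arXiv:2009.06340 — 2 statements merged into one kernel-verified Lean document; each statement's English description precedes it below -/
import Mathlib

section
/- For a real matrix X of size n₁ × n₂, the nuclear norm (sum of singular values) equals the infimum over all finite decompositions X = ∑ℓ cℓ · uℓ vℓᵀ with unit vectors uℓ, vℓ, of ∑ℓ |cℓ|. -/
/-!
Let `b` be an orthonormal eigenbasis of `Xᵀ X`. The vectors `X bᵢ` are pairwise orthogonal with
`‖X bᵢ‖ = σᵢ`, so with `aᵢ = X bᵢ / σᵢ` (for `σᵢ ≠ 0`) we get the singular value decomposition
`X = ∑ σᵢ aᵢ bᵢᵀ`, a decomposition of cost `∑ σᵢ`. Conversely, the linear functional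
`M ↦ ∑ᵢ ⟪aᵢ, M bᵢ⟫` equals `∑ σᵢ` at `X`, while on a rank-one matrix `u vᵀ` with unit `u, v` its
value `∑ᵢ ⟪aᵢ, u⟫ ⟪bᵢ, v⟫` is at most `1` in absolute value by Cauchy–Schwarz and Bessel's
inequality; hence every decomposition `X = ∑ cₗ uₗ vₗᵀ` costs at least `∑ σᵢ`.
-/

open scoped RealInnerProductSpace
noncomputable section

/-- Singular values of a real matrix: square roots of eigenvalues of `Xᵀ * X`. -/
def singVals {n₁ n₂ : ℕ} (X : Matrix (Fin n₁) (Fin n₂) ℝ) : Fin n₂ → ℝ :=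
  fun i => Real.sqrt ((Matrix.conjTranspose_eq_transpose_of_trivial X ▸ Matrix.isHermitian_conjTranspose_mul_self X : (X.transpose * X).IsHermitian).eigenvalues i)

/-- Matrix nuclear norm: sum of singular values. -/
def matNuclear {n₁ n₂ : ℕ} (X : Matrix (Fin n₁) (Fin n₂) ℝ) : ℝ := ∑ i, singVals X i

/-- Outer product `u vᵀ`. -/
def outer {n₁ n₂ : ℕ} (u : EuclideanSpace ℝ (Fin n₁)) (v : EuclideanSpace ℝ (Fin n₂)) :
    Matrix (Fin n₁) (Fin n₂) ℝ := Matrix.of fun i j => u i * v j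

open Matrix

theorem Fintype.sum_subtype_eq_sum_of_ne {ι M : Type*} [Fintype ι] [AddCommMonoid M]
    {p : ι → Prop} [DecidablePred p] (f : ι → M) (hf : ∀ i, f i ≠ 0 → p i) :
    ∑ i : {i // p i}, f i = ∑ i, f i :=
  (Finset.sum_subtype _ (by simp) f).symm.trans (Finset.sum_filter_of_ne fun i _ => hf i)

section InnerProductSpace

variable {ι E F : Type*} [NormedAddCommGroup E] [InnerProductSpace ℝ E]
  [NormedAddCommGroup F] [InnerProductSpace ℝ F]

theorem Orthonormal.sum_inner_sq_le [Fintype ι] {a : ι → E} (ha : Orthonormal ℝ a) (u : E) :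
    ∑ i, ⟪a i, u⟫ ^ 2 ≤ ‖u‖ ^ 2 := by
  simpa only [Real.norm_eq_abs, sq_abs] using ha.sum_inner_products_le (s := Finset.univ) u

theorem Orthonormal.abs_sum_inner_mul_inner_le [Fintype ι] {a : ι → E} {b : ι → F}
    (ha : Orthonormal ℝ a) (hb : Orthonormal ℝ b) (u : E) (v : F) :
    |∑ i, ⟪a i, u⟫ * ⟪b i, v⟫| ≤ ‖u‖ * ‖v‖ := by
  refine abs_le.mpr (abs_le_of_sq_le_sq' ?_ (by positivity))
  calc (∑ i, ⟪a i, u⟫ * ⟪b i, v⟫) ^ 2 ≤ (∑ i, ⟪a i, u⟫ ^ 2) * ∑ i, ⟪b i, v⟫ ^ 2 :=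
        Finset.sum_mul_sq_le_sq_mul_sq _ _ _
    _ ≤ ‖u‖ ^ 2 * ‖v‖ ^ 2 := by
        gcongr
        exacts [ha.sum_inner_sq_le u, hb.sum_inner_sq_le v]
    _ = (‖u‖ * ‖v‖) ^ 2 := by ring

theorem orthonormal_normalize_of_pairwise_inner_eq_zero {v : ι → E} {p : ι → Prop}
    (hv : Pairwise fun i j => ⟪v i, v j⟫ = 0) (hp : ∀ i, p i → v i ≠ 0) :
    Orthonormal ℝ fun i : {i // p i} => ‖v i‖⁻¹ • v i := by
  refine ⟨fun i => ?_, fun i j hij => ?_⟩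
  · rw [norm_smul, norm_inv, norm_norm, inv_mul_cancel₀ (norm_ne_zero_iff.mpr (hp i i.2))]
  · change ⟪_ • _, _ • _⟫ = 0
    rw [real_inner_smul_left, real_inner_smul_right, hv (Subtype.coe_ne_coe.mpr hij),
      mul_zero, mul_zero]

end InnerProductSpace

section Outer

variable {n₁ n₂ : ℕ}

theorem toEuclideanLin_outer (u : EuclideanSpace ℝ (Fin n₁)) (v w : EuclideanSpace ℝ (Fin n₂)) :
    toEuclideanLin (outer u v) w = ⟪v, w⟫ • u := by
  have : outer u v = toEuclideanLin.symm (InnerProductSpace.rankOne ℝ u v) := by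
    rw [InnerProductSpace.symm_toEuclideanLin_rankOne, star_trivial]; rfl
  rw [this, LinearEquiv.apply_symm_apply, ContinuousLinearMap.coe_coe,
    InnerProductSpace.rankOne_apply]

theorem outer_smul_left (c : ℝ) (u : EuclideanSpace ℝ (Fin n₁)) (v : EuclideanSpace ℝ (Fin n₂)) :
    outer (c • u) v = c • outer u v := by
  ext i j; simp [outer, mul_assoc]

theorem OrthonormalBasis.sum_outer_toEuclideanLin {ι : Type*} [Fintype ι]
    (b : OrthonormalBasis ι ℝ (EuclideanSpace ℝ (Fin n₂))) (X : Matrix (Fin n₁) (Fin n₂) ℝ) :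
    ∑ i, outer (toEuclideanLin X (b i)) (b i) = X := by
  apply toEuclideanLin.injective
  ext1 w
  simp only [map_sum, LinearMap.sum_apply, toEuclideanLin_outer]
  conv_rhs => rw [← b.sum_repr' w]
  simp [map_sum, map_smul]

theorem sum_inner_toEuclideanLin_sum_outer_le {ι κ : Type*} [Fintype ι] [Fintype κ]
    {a : ι → EuclideanSpace ℝ (Fin n₁)} {b : ι → EuclideanSpace ℝ (Fin n₂)}
    (ha : Orthonormal ℝ a) (hb : Orthonormal ℝ b) (c : κ → ℝ)
    (u : κ → EuclideanSpace ℝ (Fin n₁)) (v : κ → EuclideanSpace ℝ (Fin n₂)) :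
    ∑ i, ⟪a i, toEuclideanLin (∑ ℓ, c ℓ • outer (u ℓ) (v ℓ)) (b i)⟫ ≤
      ∑ ℓ, |c ℓ| * (‖u ℓ‖ * ‖v ℓ‖) := by
  calc _ = ∑ ℓ, c ℓ * ∑ i, ⟪a i, u ℓ⟫ * ⟪b i, v ℓ⟫ := by
        simp only [map_sum, map_smul, LinearMap.sum_apply, LinearMap.smul_apply,
          toEuclideanLin_outer, inner_sum, real_inner_smul_right, Finset.mul_sum]
        rw [Finset.sum_comm]
        simp only [real_inner_comm, mul_comm]
    _ ≤ ∑ ℓ, |c ℓ| * (‖u ℓ‖ * ‖v ℓ‖) := by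
        refine Finset.sum_le_sum fun ℓ _ => (le_abs_self _).trans ?_
        rw [abs_mul]
        exact mul_le_mul_of_nonneg_left (ha.abs_sum_inner_mul_inner_le hb _ _) (abs_nonneg _)

end Outer

theorem isHermitian_transpose_mul_self {m n : Type*} [Fintype m] (X : Matrix m n ℝ) :
    (Xᵀ * X).IsHermitian := by
  simpa only [conjTranspose_eq_transpose_of_trivial] using isHermitian_conjTranspose_mul_self X

theorem inner_toEuclideanLin_toEuclideanLin {m n : Type*} [Fintype m] [DecidableEq m]
    [Fintype n] [DecidableEq n] (X : Matrix m n ℝ) (x y : EuclideanSpace ℝ n) :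
    ⟪toEuclideanLin X x, toEuclideanLin X y⟫ = ⟪x, toEuclideanLin (Xᵀ * X) y⟫ := by
  rw [← LinearMap.adjoint_inner_right, ← toEuclideanLin_conjTranspose_eq_adjoint,
    conjTranspose_eq_transpose_of_trivial]
  simp only [toLpLin_apply, mulVec_mulVec]

section SingularValues

variable {n₁ n₂ : ℕ} (X : Matrix (Fin n₁) (Fin n₂) ℝ)

def rightSingularBasis : OrthonormalBasis (Fin n₂) ℝ (EuclideanSpace ℝ (Fin n₂)) :=
  (isHermitian_transpose_mul_self X).eigenvectorBasis

theorem inner_toEuclideanLin_rightSingularBasis (i j : Fin n₂) :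
    ⟪toEuclideanLin X (rightSingularBasis X i), toEuclideanLin X (rightSingularBasis X j)⟫ =
      if i = j then (isHermitian_transpose_mul_self X).eigenvalues i else 0 := by
  rw [inner_toEuclideanLin_toEuclideanLin, toLpLin_apply, rightSingularBasis,
    IsHermitian.mulVec_eigenvectorBasis, WithLp.toLp_smul, WithLp.toLp_ofLp, real_inner_smul_right,
    orthonormal_iff_ite.mp (OrthonormalBasis.orthonormal _)]
  split_ifs with h <;> simp [h]

theorem singVals_eq_norm (i : Fin n₂) :
    singVals X i = ‖toEuclideanLin X (rightSingularBasis X i)‖ := by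
  rw [singVals, ← Real.sqrt_sq (norm_nonneg _), ← real_inner_self_eq_norm_sq,
    inner_toEuclideanLin_rightSingularBasis, if_pos rfl]

-- `0` when `X bᵢ = 0`, as `0⁻¹ = 0`.
def leftSingularVector (i : Fin n₂) : EuclideanSpace ℝ (Fin n₁) :=
  ‖toEuclideanLin X (rightSingularBasis X i)‖⁻¹ • toEuclideanLin X (rightSingularBasis X i)

theorem singVals_smul_leftSingularVector (i : Fin n₂) :
    singVals X i • leftSingularVector X i = toEuclideanLin X (rightSingularBasis X i) := by
  rw [singVals_eq_norm, leftSingularVector]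
  by_cases h : toEuclideanLin X (rightSingularBasis X i) = 0
  · simp [h]
  · exact smul_inv_smul₀ (norm_ne_zero_iff.mpr h) _

theorem singVals_nonneg (i : Fin n₂) : 0 ≤ singVals X i :=
  singVals_eq_norm X i ▸ norm_nonneg _

theorem singVals_ne_zero_iff (i : Fin n₂) :
    singVals X i ≠ 0 ↔ toEuclideanLin X (rightSingularBasis X i) ≠ 0 := by
  rw [singVals_eq_norm, norm_ne_zero_iff]

theorem orthonormal_leftSingularVector :
    Orthonormal ℝ fun i : {i // singVals X i ≠ 0} => leftSingularVector X i :=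
  orthonormal_normalize_of_pairwise_inner_eq_zero
    (v := fun i => toEuclideanLin X (rightSingularBasis X i)) (fun i j hij => by
      dsimp only
      rw [inner_toEuclideanLin_rightSingularBasis, if_neg hij])
    fun i => (singVals_ne_zero_iff X i).mp

theorem matNuclear_eq_sum_singVals_ne_zero :
    matNuclear X = ∑ i : {i // singVals X i ≠ 0}, singVals X i :=
  (Fintype.sum_subtype_eq_sum_of_ne _ fun _ h => h).symm

theorem sum_singVals_smul_outer :
    ∑ i : {i // singVals X i ≠ 0},
      singVals X i • outer (leftSingularVector X i) (rightSingularBasis X i) = X := by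
  rw [Fintype.sum_subtype_eq_sum_of_ne
    (fun i => singVals X i • outer (leftSingularVector X i) (rightSingularBasis X i))
    fun i h hi => by simp [hi] at h]
  conv_rhs => rw [← (rightSingularBasis X).sum_outer_toEuclideanLin X]
  simp only [← outer_smul_left, singVals_smul_leftSingularVector]

theorem matNuclear_eq_sum_inner :
    matNuclear X = ∑ i : {i // singVals X i ≠ 0},
      ⟪leftSingularVector X i, toEuclideanLin X (rightSingularBasis X i)⟫ := by
  rw [matNuclear_eq_sum_singVals_ne_zero]
  refine Finset.sum_congr rfl fun i _ => ?_
  rw [← singVals_smul_leftSingularVector, real_inner_smul_right,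
    real_inner_self_eq_norm_sq, (orthonormal_leftSingularVector X).1 i, one_pow, mul_one]

end SingularValues

section Decompositions

variable {n₁ n₂ : ℕ}

def decompositionCosts (X : Matrix (Fin n₁) (Fin n₂) ℝ) : Set ℝ :=
  { s | ∃ (r : ℕ) (c : Fin r → ℝ) (u : Fin r → EuclideanSpace ℝ (Fin n₁))
      (v : Fin r → EuclideanSpace ℝ (Fin n₂)),
      (∀ ℓ, ‖u ℓ‖ = 1) ∧ (∀ ℓ, ‖v ℓ‖ = 1) ∧
      X = ∑ ℓ, c ℓ • outer (u ℓ) (v ℓ) ∧ s = ∑ ℓ, |c ℓ| }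

theorem sum_abs_mem_decompositionCosts {ι : Type*} [Fintype ι]
    {X : Matrix (Fin n₁) (Fin n₂) ℝ} {c : ι → ℝ} {u : ι → EuclideanSpace ℝ (Fin n₁)}
    {v : ι → EuclideanSpace ℝ (Fin n₂)} (hu : ∀ i, ‖u i‖ = 1) (hv : ∀ i, ‖v i‖ = 1)
    (hX : X = ∑ i, c i • outer (u i) (v i)) :
    ∑ i, |c i| ∈ decompositionCosts X := by
  let e := (Fintype.equivFin ι).symm
  refine ⟨Fintype.card ι, c ∘ e, u ∘ e, v ∘ e, fun _ => hu _, fun _ => hv _, ?_, ?_⟩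
  · rw [hX]
    exact (e.sum_comp fun i => c i • outer (u i) (v i)).symm
  · exact (e.sum_comp fun i => |c i|).symm

theorem matNuclear_le_of_mem_decompositionCosts {X : Matrix (Fin n₁) (Fin n₂) ℝ} {s : ℝ}
    (hs : s ∈ decompositionCosts X) : matNuclear X ≤ s := by
  obtain ⟨r, c, u, v, hu, hv, rfl, rfl⟩ := hs
  rw [matNuclear_eq_sum_inner]
  simpa only [hu, hv, mul_one, Function.comp_apply] using sum_inner_toEuclideanLin_sum_outer_le
    (orthonormal_leftSingularVector _)
    ((rightSingularBasis _).orthonormal.comp _ Subtype.val_injective) c u v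

theorem matNuclear_mem_decompositionCosts (X : Matrix (Fin n₁) (Fin n₂) ℝ) :
    matNuclear X ∈ decompositionCosts X := by
  rw [matNuclear_eq_sum_singVals_ne_zero]
  convert sum_abs_mem_decompositionCosts (orthonormal_leftSingularVector X).1
    (fun i => (rightSingularBasis X).orthonormal.1 i) (sum_singVals_smul_outer X).symm using 2
  exact (abs_of_nonneg (singVals_nonneg X _)).symm

theorem isLeast_matNuclear_decompositionCosts (X : Matrix (Fin n₁) (Fin n₂) ℝ) :
    IsLeast (decompositionCosts X) (matNuclear X) :=
  ⟨matNuclear_mem_decompositionCosts X, fun _ => matNuclear_le_of_mem_decompositionCosts⟩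

end Decompositions

/-- the sum of singular values of a real matrix equals the infimum of
`∑ℓ |cℓ|` over all finite decompositions `X = ∑ℓ cℓ • uℓ vℓᵀ` with unit vectors. -/
theorem matrix_nuclear_norm_eq_inf_decompositions {n₁ n₂ : ℕ}
    (X : Matrix (Fin n₁) (Fin n₂) ℝ) :
    matNuclear X =
      sInf { s | ∃ (r : ℕ) (c : Fin r → ℝ) (u : Fin r → EuclideanSpace ℝ (Fin n₁))
          (v : Fin r → EuclideanSpace ℝ (Fin n₂)),
          (∀ ℓ, ‖u ℓ‖ = 1) ∧ (∀ ℓ, ‖v ℓ‖ = 1) ∧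
          X = ∑ ℓ, c ℓ • outer (u ℓ) (v ℓ) ∧ s = ∑ ℓ, |c ℓ| } :=
  (isLeast_matNuclear_decompositionCosts X).csInf_eq.symm
end
end

section
/- For any tensor X ∈ ℝ^{n₁×n₂×n₃}, the infimum defining the tensor nuclear norm is attained: there exists a finite decomposition X = ∑ℓ cℓ · uℓ ⊗ vℓ ⊗ wℓ with unit-norm factors such that ∑ℓ |cℓ| = ‖X‖_*. -/
/-! The unit rank-one tensors `u ⊗ v ⊗ w` form a compact set `S`, symmetric because the sign of a
coefficient can be absorbed into `u`. By Carathéodory's theorem its convex hull `B` is compact, and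
for `t > 0` the cost `∑ℓ |cℓ|` of some decomposition of `X` equals `t` exactly when `t⁻¹ • X ∈ B`.
For `X ≠ 0` these `t` form a closed set that is bounded away from `0` because `B` is bounded, so it
contains its infimum. -/
open scoped RealInnerProductSpace
noncomputable section

/-- The space of `n₁ × n₂ × n₃` real tensors with the Frobenius (Euclidean) norm. -/
abbrev Tensor (n₁ n₂ n₃ : ℕ) := EuclideanSpace ℝ (Fin n₁ × Fin n₂ × Fin n₃)

/-- Rank-one tensor `u ⊗ v ⊗ w`. -/
def rk1 {n₁ n₂ n₃ : ℕ} (u : EuclideanSpace ℝ (Fin n₁)) (v : EuclideanSpace ℝ (Fin n₂))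
    (w : EuclideanSpace ℝ (Fin n₃)) : Tensor n₁ n₂ n₃ :=
  WithLp.toLp 2 (fun p => u p.1 * v p.2.1 * w p.2.2)

/-- Values `∑ℓ |cℓ|` over finite decompositions of `X` into scaled unit rank-one tensors. -/
def nuclearSet {n₁ n₂ n₃ : ℕ} (X : Tensor n₁ n₂ n₃) : Set ℝ :=
  { s | ∃ (r : ℕ) (c : Fin r → ℝ) (u : Fin r → EuclideanSpace ℝ (Fin n₁))
        (v : Fin r → EuclideanSpace ℝ (Fin n₂)) (w : Fin r → EuclideanSpace ℝ (Fin n₃)),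
      (∀ ℓ, ‖u ℓ‖ = 1) ∧ (∀ ℓ, ‖v ℓ‖ = 1) ∧ (∀ ℓ, ‖w ℓ‖ = 1) ∧
      X = ∑ ℓ, c ℓ • rk1 (u ℓ) (v ℓ) (w ℓ) ∧ s = ∑ ℓ, |c ℓ| }

/-- Tensor nuclear norm. -/
def nuclearNorm {n₁ n₂ n₃ : ℕ} (X : Tensor n₁ n₂ n₃) : ℝ := sInf (nuclearSet X)

open Set Metric

theorem isCompact_convexHull {E : Type*} [AddCommGroup E] [Module ℝ E]
    [TopologicalSpace E] [ContinuousAdd E] [ContinuousSMul ℝ E] [FiniteDimensional ℝ E]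
    {K : Set E} (hK : IsCompact K) : IsCompact (convexHull ℝ K) := by
  let comb : (k : ℕ) → (Fin k → ℝ) × (Fin k → E) → E := fun k q => ∑ i, q.1 i • q.2 i
  have hcomb : ∀ k, Continuous (comb k) := fun k => by fun_prop
  -- Carathéodory: every point of the hull is a convex combination of at most `dim E + 1` points.
  have heq : convexHull ℝ K = ⋃ k ∈ Finset.range (Module.finrank ℝ E + 2),
      comb k '' (stdSimplex ℝ (Fin k) ×ˢ univ.pi fun _ => K) := by
    refine Subset.antisymm (fun x hx => ?_) ?_
    · obtain ⟨ι, _, z, w, hzK, hz, hw0, hw1, rfl⟩ := eq_pos_convex_span_of_mem_convexHull hx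
      have hcard : Fintype.card ι < Module.finrank ℝ E + 2 :=
        Nat.lt_succ_of_le (hz.card_le_finrank_succ.trans (by simpa using Submodule.finrank_le _))
      let e := (Fintype.equivFin ι).symm
      refine mem_biUnion (Finset.mem_range.2 hcard)
        ⟨(w ∘ e, z ∘ e), ⟨⟨fun i => (hw0 _).le, ?_⟩, fun i _ => hzK ⟨_, rfl⟩⟩, ?_⟩
      · simpa only [Function.comp_apply, e.sum_comp] using hw1
      · exact e.sum_comp fun i => w i • z i
    · simp only [iUnion_subset_iff]
      rintro k - _ ⟨⟨w, z⟩, ⟨⟨hw0, hw1⟩, hz⟩, rfl⟩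
      exact (convex_convexHull ℝ K).sum_mem (fun i _ => hw0 i) hw1
        fun i _ => subset_convexHull ℝ K (hz i trivial)
  rw [heq]
  exact (Finset.range _).isCompact_biUnion fun k _ =>
    ((isCompact_stdSimplex ℝ (Fin k)).prod (isCompact_univ_pi fun _ => hK)).image (hcomb k)

theorem IsCompact.csInf_mem_setOf_inv_smul_mem {E : Type*} [NormedAddCommGroup E]
    [NormedSpace ℝ E] {K : Set E} (hK : IsCompact K) {x : E} (hx : x ≠ 0)
    (hne : {t : ℝ | 0 < t ∧ t⁻¹ • x ∈ K}.Nonempty) :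
    sInf {t : ℝ | 0 < t ∧ t⁻¹ • x ∈ K} ∈ {t : ℝ | 0 < t ∧ t⁻¹ • x ∈ K} := by
  obtain ⟨R, hR, hKR⟩ := hK.isBounded.exists_pos_norm_le
  have hδ : 0 < ‖x‖ / R := div_pos (norm_pos_iff.2 hx) hR
  have hlow : ∀ t : ℝ, 0 < t → t⁻¹ • x ∈ K → ‖x‖ / R ≤ t := fun t ht htK => by
    have := hKR _ htK
    rw [norm_smul, norm_inv, Real.norm_of_nonneg ht.le, inv_mul_le_iff₀ ht] at this
    rwa [div_le_iff₀ hR]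
  have hT : {t : ℝ | 0 < t ∧ t⁻¹ • x ∈ K} = Ici (‖x‖ / R) ∩ (fun t : ℝ => t⁻¹ • x) ⁻¹' K := by
    ext t
    exact ⟨fun ⟨ht, htK⟩ => ⟨hlow t ht htK, htK⟩, fun ⟨ht, htK⟩ => ⟨hδ.trans_le ht, htK⟩⟩
  have hclosed : IsClosed (Ici (‖x‖ / R) ∩ (fun t : ℝ => t⁻¹ • x) ⁻¹' K) :=
    ContinuousOn.preimage_isClosed_of_isClosed
      ((continuousOn_inv₀.mono fun t ht => (hδ.trans_le ht).ne').smul continuousOn_const)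
      isClosed_Ici hK.isClosed
  rw [hT] at hne ⊢
  exact hclosed.csInf_mem hne ⟨‖x‖ / R, fun t ht => ht.1⟩

section
variable {n₁ n₂ n₃ : ℕ}

theorem continuous_rk1 :
    Continuous fun q : EuclideanSpace ℝ (Fin n₁) × EuclideanSpace ℝ (Fin n₂) ×
      EuclideanSpace ℝ (Fin n₃) => (rk1 q.1 q.2.1 q.2.2 : Tensor n₁ n₂ n₃) := by
  unfold rk1
  fun_prop

theorem rk1_neg_left (u : EuclideanSpace ℝ (Fin n₁)) (v : EuclideanSpace ℝ (Fin n₂))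
    (w : EuclideanSpace ℝ (Fin n₃)) : rk1 (-u) v w = -rk1 u v w := by
  ext p
  simp [rk1]

theorem rk1_single (p : Fin n₁ × Fin n₂ × Fin n₃) :
    rk1 (EuclideanSpace.single p.1 1) (EuclideanSpace.single p.2.1 1)
      (EuclideanSpace.single p.2.2 1) = EuclideanSpace.single p 1 := by
  ext q
  simp only [rk1, PiLp.single_apply, Prod.ext_iff, mul_ite, mul_one, mul_zero]
  split_ifs <;> tauto

theorem exists_smul_rk1_eq_abs_smul (c : ℝ) (u : EuclideanSpace ℝ (Fin n₁))
    (v : EuclideanSpace ℝ (Fin n₂)) (w : EuclideanSpace ℝ (Fin n₃)) :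
    ∃ u' : EuclideanSpace ℝ (Fin n₁), ‖u'‖ = ‖u‖ ∧ c • rk1 u v w = |c| • rk1 u' v w := by
  rcases le_or_gt 0 c with hc | hc
  · exact ⟨u, rfl, by rw [abs_of_nonneg hc]⟩
  · exact ⟨-u, norm_neg u, by rw [abs_of_neg hc, rk1_neg_left, neg_smul, smul_neg, neg_neg]⟩

variable (n₁ n₂ n₃) in
def unitRankOnes : Set (Tensor n₁ n₂ n₃) :=
  (fun q => rk1 q.1 q.2.1 q.2.2) '' (sphere 0 1 ×ˢ sphere 0 1 ×ˢ sphere 0 1)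

theorem isCompact_convexHull_unitRankOnes : IsCompact (convexHull ℝ (unitRankOnes n₁ n₂ n₃)) :=
  isCompact_convexHull <|
    ((isCompact_sphere 0 1).prod ((isCompact_sphere 0 1).prod (isCompact_sphere 0 1))).image
      continuous_rk1

theorem sum_abs_mem_nuclearSet {ι : Type*} [Fintype ι] {X : Tensor n₁ n₂ n₃} (c : ι → ℝ)
    (u : ι → EuclideanSpace ℝ (Fin n₁)) (v : ι → EuclideanSpace ℝ (Fin n₂))
    (w : ι → EuclideanSpace ℝ (Fin n₃)) (hu : ∀ i, ‖u i‖ = 1) (hv : ∀ i, ‖v i‖ = 1)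
    (hw : ∀ i, ‖w i‖ = 1) (hX : X = ∑ i, c i • rk1 (u i) (v i) (w i)) :
    ∑ i, |c i| ∈ nuclearSet X := by
  let e := (Fintype.equivFin ι).symm
  exact ⟨Fintype.card ι, c ∘ e, u ∘ e, v ∘ e, w ∘ e, fun ℓ => hu _, fun ℓ => hv _, fun ℓ => hw _,
    hX.trans (e.sum_comp fun i => c i • rk1 (u i) (v i) (w i)).symm,
    (e.sum_comp fun i => |c i|).symm⟩

theorem nuclearSet_nonempty (X : Tensor n₁ n₂ n₃) : (nuclearSet X).Nonempty := by
  refine ⟨_, sum_abs_mem_nuclearSet (fun p => X p) (fun p => EuclideanSpace.single p.1 1)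
    (fun p => EuclideanSpace.single p.2.1 1) (fun p => EuclideanSpace.single p.2.2 1)
    (fun _ => by simp) (fun _ => by simp) (fun _ => by simp) ?_⟩
  simp only [rk1_single]
  simpa using ((EuclideanSpace.basisFun _ ℝ).sum_repr X).symm

theorem nuclearSet_nonneg {X : Tensor n₁ n₂ n₃} {s : ℝ} (hs : s ∈ nuclearSet X) : 0 ≤ s := by
  obtain ⟨r, c, u, v, w, -, -, -, -, rfl⟩ := hs
  positivity

theorem pos_of_mem_nuclearSet {X : Tensor n₁ n₂ n₃} (hX : X ≠ 0) {s : ℝ}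
    (hs : s ∈ nuclearSet X) : 0 < s := by
  refine (nuclearSet_nonneg hs).lt_of_ne fun hs0 => hX ?_
  obtain ⟨r, c, u, v, w, -, -, -, rfl, rfl⟩ := hs
  have hc : ∀ ℓ, c ℓ = 0 := fun ℓ => abs_eq_zero.1
    ((Finset.sum_eq_zero_iff_of_nonneg fun i _ => abs_nonneg (c i)).1 hs0.symm ℓ
      (Finset.mem_univ ℓ))
  simp [hc]

theorem mem_nuclearSet_iff_inv_smul_mem_convexHull {X : Tensor n₁ n₂ n₃} {t : ℝ} (ht : 0 < t) :
    t ∈ nuclearSet X ↔ t⁻¹ • X ∈ convexHull ℝ (unitRankOnes n₁ n₂ n₃) := by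
  constructor
  · rintro ⟨r, c, u, v, w, hu, hv, hw, rfl, rfl⟩
    choose u' hu' hc using fun ℓ => exists_smul_rk1_eq_abs_smul (c ℓ) (u ℓ) (v ℓ) (w ℓ)
    convert (convex_convexHull ℝ _).sum_mem (t := Finset.univ)
      (w := fun ℓ => (∑ i, |c i|)⁻¹ * |c ℓ|) (z := fun ℓ => rk1 (u' ℓ) (v ℓ) (w ℓ))
      (fun ℓ _ => by positivity) (by rw [← Finset.mul_sum, inv_mul_cancel₀ ht.ne'])
      (fun ℓ _ => subset_convexHull ℝ (unitRankOnes n₁ n₂ n₃)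
        ⟨(u' ℓ, v ℓ, w ℓ), ⟨by simp [hu', hu], by simp [hv], by simp [hw]⟩, rfl⟩) using 1
    simp only [Finset.smul_sum, hc, smul_smul]
  · rw [mem_convexHull_iff_exists_fintype]
    rintro ⟨ι, _, a, z, ha0, ha1, hz, hX⟩
    choose q hq hzq using hz
    convert sum_abs_mem_nuclearSet (fun i => t * a i) (fun i => (q i).1) (fun i => (q i).2.1)
      (fun i => (q i).2.2) (fun i => by simpa using (hq i).1) (fun i => by simpa using (hq i).2.1)
      (fun i => by simpa using (hq i).2.2) ?_ using 1
    · simp only [abs_mul, abs_of_pos ht, abs_of_nonneg (ha0 _), ← Finset.mul_sum, ha1, mul_one]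
    · rw [← smul_inv_smul₀ ht.ne' X, ← hX, Finset.smul_sum]
      simp only [← hzq, smul_smul]

theorem nuclearSet_eq_of_ne_zero {X : Tensor n₁ n₂ n₃} (hX : X ≠ 0) :
    nuclearSet X = {t | 0 < t ∧ t⁻¹ • X ∈ convexHull ℝ (unitRankOnes n₁ n₂ n₃)} := by
  ext t
  exact ⟨fun ht => ⟨pos_of_mem_nuclearSet hX ht,
    (mem_nuclearSet_iff_inv_smul_mem_convexHull (pos_of_mem_nuclearSet hX ht)).1 ht⟩,
    fun ⟨ht, htX⟩ => (mem_nuclearSet_iff_inv_smul_mem_convexHull ht).2 htX⟩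

theorem nuclearNorm_mem_nuclearSet (X : Tensor n₁ n₂ n₃) : nuclearNorm X ∈ nuclearSet X := by
  by_cases hX : X = 0
  · subst hX
    have h0 : (0 : ℝ) ∈ nuclearSet (0 : Tensor n₁ n₂ n₃) :=
      ⟨0, Fin.elim0, Fin.elim0, Fin.elim0, Fin.elim0, (·.elim0), (·.elim0), (·.elim0),
        by simp, by simp⟩
    rwa [nuclearNorm, IsLeast.csInf_eq ⟨h0, fun s => nuclearSet_nonneg⟩]
  · rw [nuclearNorm, nuclearSet_eq_of_ne_zero hX]
    exact isCompact_convexHull_unitRankOnes.csInf_mem_setOf_inv_smul_mem hX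
      (nuclearSet_eq_of_ne_zero hX ▸ nuclearSet_nonempty X)

end

/-- the infimum defining the tensor nuclear norm is attained by some
finite decomposition into scaled unit-norm rank-one tensors. -/
theorem tensor_nuclearNorm_attained {n₁ n₂ n₃ : ℕ} (X : Tensor n₁ n₂ n₃) :
    ∃ (r : ℕ) (c : Fin r → ℝ) (u : Fin r → EuclideanSpace ℝ (Fin n₁))
      (v : Fin r → EuclideanSpace ℝ (Fin n₂)) (w : Fin r → EuclideanSpace ℝ (Fin n₃)),
      (∀ ℓ, ‖u ℓ‖ = 1) ∧ (∀ ℓ, ‖v ℓ‖ = 1) ∧ (∀ ℓ, ‖w ℓ‖ = 1) ∧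
      X = ∑ ℓ, c ℓ • rk1 (u ℓ) (v ℓ) (w ℓ) ∧ (∑ ℓ, |c ℓ|) = nuclearNorm X := by
  obtain ⟨r, c, u, v, w, hu, hv, hw, hX, hc⟩ := nuclearNorm_mem_nuclearSet X
  exact ⟨r, c, u, v, w, hu, hv, hw, hX, hc.symm⟩
end
end
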